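/- Let k > n ≥ 2 be reals and v_{11}, B, X reals, and let Q = 2 Σ_{α=2}^n v_{1α}^2 ≥ 0. If E = (n/(n-1)) v_{11}² + Q + (2v_{11}/(n-1)) B + (1/(n-1)) B² + ((k-1)/((k-n)(n-1))) X² + (2X/(n-1))(B + v_{11}), then E ≥ (k/(k-1)) v_{11}² + Q + (2 v_{11}/(k-1)) B + (1/(k-1)) B². -/
import Mathlib

theorem dimension_upgrade (k n v₁₁ B X Q : ℝ) (hn : 2 ≤ n) (hk : n < k) (hQ : 0 ≤ Q) :
    (n / (n - 1)) * v₁₁ ^ 2 + Q + (2 * v₁₁ / (n - 1)) * B + (1 / (n - 1)) * B ^ 2 +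
        ((k - 1) / ((k - n) * (n - 1))) * X ^ 2 + (2 * X / (n - 1)) * (B + v₁₁) ≥
      (k / (k - 1)) * v₁₁ ^ 2 + Q + (2 * v₁₁ / (k - 1)) * B + (1 / (k - 1)) * B ^ 2 := by
  have hn1 : (0:ℝ) < n - 1 := by linarith
  have hk1 : (0:ℝ) < k - 1 := by linarith
  have hkn : (0:ℝ) < k - n := by linarith
  rw [ge_iff_le, ← sub_nonneg]
  have key : (n / (n - 1)) * v₁₁ ^ 2 + Q + (2 * v₁₁ / (n - 1)) * B + (1 / (n - 1)) * B ^ 2 +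
        ((k - 1) / ((k - n) * (n - 1))) * X ^ 2 + (2 * X / (n - 1)) * (B + v₁₁) -
      ((k / (k - 1)) * v₁₁ ^ 2 + Q + (2 * v₁₁ / (k - 1)) * B + (1 / (k - 1)) * B ^ 2)
      = ((k - n) * (v₁₁ + B) + (k - 1) * X) ^ 2 / ((n - 1) * (k - n) * (k - 1)) := by
    field_simp
    ring
  rw [key]
  positivity
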